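/- Let ν > 1/2 and t ≥ 1. Define I_ν(t) = (2e^t(2t)^ν/(√π·Γ(ν+½)))·∫₀¹ e^{−2tu²} u^{2ν} (1−u²)^{ν−½} du. Then 0 < I_ν(t) ≤ e^t/√(2πt). -/

import Mathlib

/-! On `[0, 1]` the factor `(1 - u²)^(ν - 1/2)` lies in `[0, 1]` because `ν ≥ 1/2`. Dropping it and
extending the range of integration to `(0, ∞)` leaves the Gaussian moment
`∫₀^∞ u^(2ν) e^(-2tu²) du = Γ(ν + 1/2) / (2 (2t)^(ν + 1/2))`, which the prefactor of `I_ν` turns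
into exactly `e^t / √(2πt)`. -/

noncomputable section

open Real MeasureTheory

/-- Modified Bessel function of the first kind of order `ν`, by its integral representation
(valid for `ν > −1/2`, `t > 0`). -/
def besselI (ν t : ℝ) : ℝ :=
  2 * Real.exp t * (2 * t) ^ ν / (Real.sqrt Real.pi * Real.Gamma (ν + 1/2)) *
    ∫ u in (0:ℝ)..1, Real.exp (-2 * t * u ^ 2) * u ^ (2 * ν) * (1 - u ^ 2) ^ (ν - 1/2)

open Set

theorem integral_rpow_mul_exp_neg_mul_sq {b s : ℝ} (hb : 0 < b) (hs : -1 < s) :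
    ∫ x in Ioi (0 : ℝ), x ^ s * exp (-b * x ^ 2) =
      b ^ (-(s + 1) / 2) * (1 / 2) * Gamma ((s + 1) / 2) := by
  simp_rw [← rpow_two]
  exact integral_rpow_mul_exp_neg_mul_rpow two_pos hs hb

theorem intervalIntegral_exp_mul_rpow_mul_one_sub_sq_rpow_pos {b s μ : ℝ} (hs : 0 ≤ s)
    (hμ : 0 ≤ μ) : 0 < ∫ u in (0 : ℝ)..1, exp (-b * u ^ 2) * u ^ s * (1 - u ^ 2) ^ μ := by
  have hcont : Continuous fun u : ℝ => exp (-b * u ^ 2) * u ^ s * (1 - u ^ 2) ^ μ := by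
    fun_prop (disch := assumption)
  refine intervalIntegral.intervalIntegral_pos_of_pos_on
    (hcont.intervalIntegrable 0 1) (fun u ⟨hu0, hu1⟩ => ?_) one_pos
  have : 0 < 1 - u ^ 2 := by nlinarith
  positivity

theorem intervalIntegral_exp_mul_rpow_mul_one_sub_sq_rpow_le {b s μ : ℝ} (hb : 0 < b)
    (hs : -1 < s) (hμ : 0 ≤ μ) :
    ∫ u in (0 : ℝ)..1, exp (-b * u ^ 2) * u ^ s * (1 - u ^ 2) ^ μ ≤
      b ^ (-(s + 1) / 2) * (1 / 2) * Gamma ((s + 1) / 2) := by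
  set g : ℝ → ℝ := fun u => u ^ s * exp (-b * u ^ 2)
  have hg : IntegrableOn g (Ioi 0) := integrableOn_rpow_mul_exp_neg_mul_sq hb hs
  rw [intervalIntegral.integral_of_le zero_le_one, ← integral_rpow_mul_exp_neg_mul_sq hb hs]
  calc ∫ u in Ioc 0 1, exp (-b * u ^ 2) * u ^ s * (1 - u ^ 2) ^ μ
      ≤ ∫ u in Ioc 0 1, g u := by
        refine integral_mono_of_nonneg ?_ (hg.mono_set Ioc_subset_Ioi_self) ?_
        all_goals filter_upwards [ae_restrict_mem measurableSet_Ioc] with u ⟨hu0, hu1⟩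
        all_goals have h1 : 0 ≤ 1 - u ^ 2 := by nlinarith
        · positivity
        · calc exp (-b * u ^ 2) * u ^ s * (1 - u ^ 2) ^ μ
              ≤ exp (-b * u ^ 2) * u ^ s * 1 := by
                gcongr
                exact rpow_le_one h1 (by nlinarith) hμ
            _ = g u := by ring
    _ ≤ ∫ u in Ioi 0, g u := by
        refine setIntegral_mono_set hg ?_ Ioc_subset_Ioi_self.eventuallyLE
        filter_upwards [ae_restrict_mem measurableSet_Ioi] with u (hu : 0 < u)
        positivity

theorem besselI_prefactor_mul_gaussianMoment_eq {ν t : ℝ} (ht : 0 < t) (hν : -1 / 2 < ν) :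
    2 * exp t * (2 * t) ^ ν / (√π * Gamma (ν + 1 / 2)) *
        ((2 * t) ^ (-(2 * ν + 1) / 2) * (1 / 2) * Gamma ((2 * ν + 1) / 2)) =
      exp t / √(2 * π * t) := by
  have hT : 0 < 2 * t := by linarith
  have hG : Gamma ((2 * ν + 1) / 2) ≠ 0 := (Gamma_pos_of_pos (by linarith)).ne'
  have hpow : (2 * t) ^ ν * (2 * t) ^ (-(2 * ν + 1) / 2) = (√(2 * t))⁻¹ := by
    rw [← rpow_add hT, sqrt_eq_rpow, ← rpow_neg hT.le]
    ring_nf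
  have hsqrt : √(2 * π * t) = √π * √(2 * t) := by
    rw [← sqrt_mul pi_pos.le]
    ring_nf
  rw [show ν + 1 / 2 = (2 * ν + 1) / 2 by ring, hsqrt]
  calc _ = exp t * ((2 * t) ^ ν * (2 * t) ^ (-(2 * ν + 1) / 2)) / √π := by field_simp
    _ = _ := by rw [hpow]; field_simp

/-- Lemma 2.3 (v): for `ν > 1/2` and `t ≥ 1`, `0 < I_ν(t) ≤ e^t/√(2πt)`. -/
theorem stmt8 (ν t : ℝ) (hν : 1/2 < ν) (ht : 1 ≤ t) :
    0 < besselI ν t ∧ besselI ν t ≤ Real.exp t / Real.sqrt (2 * Real.pi * t) := by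
  have ht0 : 0 < t := by linarith
  have hμ : 0 ≤ ν - 1 / 2 := by linarith
  have hc : 0 < 2 * exp t * (2 * t) ^ ν / (√π * Gamma (ν + 1 / 2)) := by
    have := Gamma_pos_of_pos (show 0 < ν + 1 / 2 by linarith)
    positivity
  have hle := intervalIntegral_exp_mul_rpow_mul_one_sub_sq_rpow_le (b := 2 * t)
    (by positivity) (by linarith : -1 < 2 * ν) hμ
  unfold besselI
  simp only [neg_mul] at hle ⊢
  refine ⟨mul_pos hc ?_, ?_⟩
  · simpa only [neg_mul] using
      intervalIntegral_exp_mul_rpow_mul_one_sub_sq_rpow_pos (b := 2 * t) (by linarith) hμ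
  · calc _ ≤ _ := mul_le_mul_of_nonneg_left hle hc.le
      _ = _ := besselI_prefactor_mul_gaussianMoment_eq ht0 (by linarith)
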